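/- Let X_1,…,X_n be independent random vectors in ℝ^k with zero mean and finite fourth absolute moments δ_j^4 = E‖X_j‖^4, let θ ∈ S^{n−1}, and let Y_j = X_j·1{‖θ_j X_j‖ ≤ 1}. Then the weighted mean vector A_n = Σ_{j=1}^n θ_j·E Y_j satisfies ‖A_n‖ ≤ √k·Σ_{j=1}^n θ_j^4·δ_j^4 = √k·δ_θ^4. -/

import Mathlib

open MeasureTheory ProbabilityTheory Real

/-- Truncation `Y = X·1{‖c X‖ ≤ 1}`. -/
noncomputable def truncV {Ω : Type*} {k : ℕ} (X : Ω → EuclideanSpace ℝ (Fin k)) (c : ℝ) :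
    Ω → EuclideanSpace ℝ (Fin k) :=
  fun ω => if ‖c • X ω‖ ≤ 1 then X ω else 0

/-!
Since `E X_j = 0`, the mean of the truncation `Y_j` is minus the mean of the discarded tail
`X_j 1{‖θ_j X_j‖ > 1}`. On that event `1 < (|θ_j| ‖X_j‖)³`, so the tail has norm at most
`|θ_j|³ ‖X_j‖⁴`, giving `‖θ_j E Y_j‖ ≤ θ_j⁴ δ_j⁴`. Summing and the triangle inequality conclude,
the factor `√k ≥ 1` being harmless (and `k = 0` trivial).
-/

theorem MeasureTheory.Integrable.of_integrable_norm_pow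
    {Ω E : Type*} [MeasurableSpace Ω] {μ : Measure Ω} [IsFiniteMeasure μ]
    [NormedAddCommGroup E] {f : Ω → E} (hf : AEStronglyMeasurable f μ) {p : ℕ} (hp : 1 ≤ p)
    (hint : Integrable (fun ω => ‖f ω‖ ^ p) μ) : Integrable f μ := by
  rw [← integrable_norm_iff hf]
  simpa using integrable_norm_pow_of_le hf hp hint

theorem norm_le_abs_pow_mul_norm_pow_of_one_lt_norm_smul {E : Type*} [NormedAddCommGroup E]
    [NormedSpace ℝ E] {c : ℝ} {x : E} (h : 1 < ‖c • x‖) (m : ℕ) :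
    ‖x‖ ≤ |c| ^ m * ‖x‖ ^ (m + 1) := by
  rw [norm_smul, Real.norm_eq_abs] at h
  calc ‖x‖ = ‖x‖ * 1 := (mul_one _).symm
    _ ≤ ‖x‖ * (|c| * ‖x‖) ^ m := by gcongr; exact one_le_pow₀ h.le
    _ = |c| ^ m * ‖x‖ ^ (m + 1) := by ring

theorem EuclideanSpace.norm_le_sqrt_mul_of_norm_le {k : ℕ} {v : EuclideanSpace ℝ (Fin k)} {a : ℝ}
    (h : ‖v‖ ≤ a) : ‖v‖ ≤ √k * a := by
  rcases Nat.eq_zero_or_pos k with rfl | hk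
  · simp [Subsingleton.elim v 0]
  · have hk1 : (1 : ℝ) ≤ √k := Real.one_le_sqrt.mpr (by exact_mod_cast hk)
    nlinarith [norm_nonneg v]

section truncV

variable {Ω : Type*} {k : ℕ} {X : Ω → EuclideanSpace ℝ (Fin k)} {c : ℝ}

theorem norm_truncV_le (ω : Ω) : ‖truncV X c ω‖ ≤ ‖X ω‖ := by
  unfold truncV
  split_ifs <;> simp

theorem norm_sub_truncV_le (ω : Ω) : ‖X ω - truncV X c ω‖ ≤ |c| ^ 3 * ‖X ω‖ ^ 4 := by
  unfold truncV
  split_ifs with h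
  · simp only [sub_self, norm_zero]
    positivity
  · simpa using norm_le_abs_pow_mul_norm_pow_of_one_lt_norm_smul (not_le.mp h) 3

variable [MeasurableSpace Ω]

theorem measurable_truncV (hX : Measurable X) : Measurable (truncV X c) :=
  Measurable.ite (measurableSet_le (hX.const_smul c).norm measurable_const) hX measurable_const

variable {μ : Measure Ω}

theorem integrable_truncV (hXm : Measurable X) (hX : Integrable X μ) :
    Integrable (truncV X c) μ :=
  hX.norm.mono' (measurable_truncV hXm).aestronglyMeasurable
    (Filter.Eventually.of_forall norm_truncV_le)

theorem norm_smul_integral_truncV_le (hXm : Measurable X) (hX : Integrable X μ)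
    (hmean : ∫ ω, X ω ∂μ = 0) (hmom : Integrable (fun ω => ‖X ω‖ ^ 4) μ) :
    ‖c • ∫ ω, truncV X c ω ∂μ‖ ≤ c ^ 4 * ∫ ω, ‖X ω‖ ^ 4 ∂μ := by
  have htrunc := integrable_truncV (c := c) hXm hX
  have hmean_tail : ∫ ω, truncV X c ω ∂μ = -∫ ω, X ω - truncV X c ω ∂μ := by
    rw [integral_sub hX htrunc, hmean, zero_sub, neg_neg]
  have htail : ‖∫ ω, X ω - truncV X c ω ∂μ‖ ≤ |c| ^ 3 * ∫ ω, ‖X ω‖ ^ 4 ∂μ :=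
    calc ‖∫ ω, X ω - truncV X c ω ∂μ‖ ≤ ∫ ω, ‖X ω - truncV X c ω‖ ∂μ :=
          norm_integral_le_integral_norm _
      _ ≤ ∫ ω, |c| ^ 3 * ‖X ω‖ ^ 4 ∂μ :=
          integral_mono (hX.sub htrunc).norm (hmom.const_mul _) norm_sub_truncV_le
      _ = |c| ^ 3 * ∫ ω, ‖X ω‖ ^ 4 ∂μ := integral_const_mul _ _
  calc ‖c • ∫ ω, truncV X c ω ∂μ‖ = |c| * ‖∫ ω, X ω - truncV X c ω ∂μ‖ := by
        rw [hmean_tail, norm_smul, norm_neg, Real.norm_eq_abs]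
    _ ≤ |c| * (|c| ^ 3 * ∫ ω, ‖X ω‖ ^ 4 ∂μ) := by gcongr
    _ = c ^ 4 * ∫ ω, ‖X ω‖ ^ 4 ∂μ := by
        rw [← mul_assoc, ← pow_succ', Even.pow_abs ⟨2, rfl⟩]

end truncV

theorem weighted_mean_trunc_bound_general
    {Ω : Type*} [MeasurableSpace Ω] {μ : Measure Ω} [IsProbabilityMeasure μ]
    {k n : ℕ} (X : Fin n → Ω → EuclideanSpace ℝ (Fin k))
    (hmeas : ∀ j, Measurable (X j))
    (hmean : ∀ j, ∫ ω, X j ω ∂μ = 0)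
    (hmom : ∀ j, Integrable (fun ω => ‖X j ω‖ ^ 4) μ)
    (θ : Fin n → ℝ) :
    ‖∑ j, θ j • ∫ ω, truncV (X j) (θ j) ω ∂μ‖ ≤
      Real.sqrt k * ∑ j, θ j ^ 4 * ∫ ω, ‖X j ω‖ ^ 4 ∂μ := by
  have hint j : Integrable (X j) μ :=
    .of_integrable_norm_pow (hmeas j).aestronglyMeasurable (by norm_num) (hmom j)
  refine EuclideanSpace.norm_le_sqrt_mul_of_norm_le ((norm_sum_le _ _).trans ?_)
  exact Finset.sum_le_sum fun j _ =>
    norm_smul_integral_truncV_le (hmeas j) (hint j) (hmean j) (hmom j)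

/-- the weighted mean vector `A_n = Σ θ_j E Y_j` of the truncated
vectors satisfies `‖A_n‖ ≤ √k · δ_θ⁴`. -/
theorem weighted_mean_trunc_bound
    {Ω : Type*} [MeasurableSpace Ω] {μ : Measure Ω} [IsProbabilityMeasure μ]
    {k n : ℕ} (X : Fin n → Ω → EuclideanSpace ℝ (Fin k))
    (hmeas : ∀ j, Measurable (X j))
    (hindep : iIndepFun X μ)
    (hmean : ∀ j, ∫ ω, X j ω ∂μ = 0)
    (hmom : ∀ j, Integrable (fun ω => ‖X j ω‖ ^ 4) μ)
    (θ : Fin n → ℝ) (hθ : ∑ j, θ j ^ 2 = 1) :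
    ‖∑ j, θ j • ∫ ω, truncV (X j) (θ j) ω ∂μ‖ ≤
      Real.sqrt k * ∑ j, θ j ^ 4 * ∫ ω, ‖X j ω‖ ^ 4 ∂μ :=
  weighted_mean_trunc_bound_general X hmeas hmean hmom θ
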